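/- arXiv:2210.14839 — 8 statements merged into one kernel-verified Lean document; each statement's English description precedes it below -/
import Mathlib

section
/- The length of the longest decreasing subsequence of an involution π in the symmetric group S_n is either 2·nest(π) or 2·nest(π)+1, where nest(π) is the nesting number; equivalently, nest(π) = ⌊ℓ(π)/2⌋ where ℓ(π) is the length of the longest decreasing subsequence of the one-line notation of π. -/
/-- `π` has a decreasing subsequence of length `t`:
positions `p 0 < p 1 < ⋯` with strictly decreasing values. -/
def HasDecSubseq {n : ℕ} (π : Equiv.Perm (Fin n)) (t : ℕ) : Prop :=
  ∃ p : Fin t → Fin n, StrictMono p ∧ StrictAnti (fun s => π (p s))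

/-- The length of the longest decreasing subsequence of `π`. -/
noncomputable def decLen {n : ℕ} (π : Equiv.Perm (Fin n)) : ℕ :=
  sSup {t | HasDecSubseq π t}

/-- `π` has a nesting of size `r`: positions `i₁ < ⋯ < i_r < j_r < ⋯ < j₁`
with `π i_t = j_t` for all `t`. -/
def HasNesting {n : ℕ} (π : Equiv.Perm (Fin n)) (r : ℕ) : Prop :=
  ∃ f : Fin r → Fin n, StrictMono f ∧ StrictAnti (fun t => π (f t)) ∧ ∀ t, f t < π (f t)

/-- The nesting number of `π`. -/
noncomputable def nestP {n : ℕ} (π : Equiv.Perm (Fin n)) : ℕ :=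
  sSup {r | HasNesting π r}

/-- `π` has a crossing of size `r`: matched pairs `{i_t, j_t}` with
`i₁ < ⋯ < i_r < j₁ < ⋯ < j_r`. -/
def HasCrossing {n : ℕ} (π : Equiv.Perm (Fin n)) (r : ℕ) : Prop :=
  ∃ f : Fin r → Fin n, StrictMono f ∧ StrictMono (fun t => π (f t)) ∧
    ∀ s t : Fin r, f s < π (f t)

/-- The crossing number of `π`. -/
noncomputable def crnP {n : ℕ} (π : Equiv.Perm (Fin n)) : ℕ :=
  sSup {r | HasCrossing π r}

/-- The descent set of `π` (positions `0`-indexed): `i` with `π i > π (i+1)`. -/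
def DesP {n : ℕ} (π : Equiv.Perm (Fin n)) : Set ℕ :=
  {i | ∃ h : i + 1 < n, π ⟨i + 1, h⟩ < π ⟨i, Nat.lt_of_succ_lt h⟩}

/-- The arcs `{a, π a}` and `{b, π b}` (drawn above a line) intersect. -/
def ArcCross {n : ℕ} (π : Equiv.Perm (Fin n)) (a b : Fin n) : Prop :=
  (min a (π a) < min b (π b) ∧ min b (π b) < max a (π a) ∧ max a (π a) < max b (π b)) ∨
  (min b (π b) < min a (π a) ∧ min a (π a) < max b (π b) ∧ max b (π b) < max a (π a))

/-- The geometric descent set of the (partial) matching corresponding to the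
involution `π`: `i` such that `{i, i+1}` is a matched pair, or the arcs of `i`
and `i+1` intersect, or `i` is unmatched while `i+1` is matched. -/
def MDesP {n : ℕ} (π : Equiv.Perm (Fin n)) : Set ℕ :=
  {i | ∃ h : i + 1 < n,
    (π ⟨i, Nat.lt_of_succ_lt h⟩ = ⟨i + 1, h⟩) ∨
    (π ⟨i, Nat.lt_of_succ_lt h⟩ ≠ ⟨i, Nat.lt_of_succ_lt h⟩ ∧ π ⟨i + 1, h⟩ ≠ ⟨i + 1, h⟩ ∧
      ArcCross π ⟨i, Nat.lt_of_succ_lt h⟩ ⟨i + 1, h⟩) ∨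
    (π ⟨i, Nat.lt_of_succ_lt h⟩ = ⟨i, Nat.lt_of_succ_lt h⟩ ∧ π ⟨i + 1, h⟩ ≠ ⟨i + 1, h⟩)}


lemma key_lt {n : ℕ} {π : Equiv.Perm (Fin n)} {r : ℕ} {f : Fin r → Fin n}
    (hf : StrictMono f) (ha : StrictAnti (fun t => π (f t)))
    (hl : ∀ t, f t < π (f t)) (a b : Fin r) : f a < π (f b) := by
  rcases le_total a b with h | h
  · exact lt_of_le_of_lt (hf.monotone h) (hl b)
  · exact lt_of_lt_of_le (hl a) (ha.antitone h)

lemma nesting_to_dec {n : ℕ} {π : Equiv.Perm (Fin n)} (hπ : Function.Involutive ⇑π)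
    {r : ℕ} (h : HasNesting π r) : HasDecSubseq π (2 * r) := by
  obtain ⟨f, hf, ha, hl⟩ := h
  refine ⟨fun s => if h : (s : ℕ) < r then f ⟨s, h⟩ else π (f ⟨2 * r - 1 - s, by omega⟩), ?_, ?_⟩
  · intro s₁ s₂ hlt
    by_cases h1 : (s₁ : ℕ) < r <;> by_cases h2 : (s₂ : ℕ) < r <;>
      simp only [dif_pos, dif_neg, h1, h2, dite_true, dite_false]
    · exact hf (by exact hlt)
    · exact key_lt hf ha hl _ _
    · omega
    · exact ha (show (⟨2 * r - 1 - s₂, by omega⟩ : Fin r) < ⟨2 * r - 1 - s₁, by omega⟩ by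
        simp only [Fin.mk_lt_mk]; omega)
  · intro s₁ s₂ hlt
    by_cases h1 : (s₁ : ℕ) < r <;> by_cases h2 : (s₂ : ℕ) < r <;>
      simp only [dif_pos, dif_neg, h1, h2, dite_true, dite_false, hπ _]
    · exact ha (by exact hlt)
    · exact key_lt hf ha hl _ _
    · omega
    · exact hf (show (⟨2 * r - 1 - s₂, by omega⟩ : Fin r) < ⟨2 * r - 1 - s₁, by omega⟩ by
        simp only [Fin.mk_lt_mk]; omega)

lemma dec_to_nesting {n : ℕ} {π : Equiv.Perm (Fin n)} (hπ : Function.Involutive ⇑π)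
    {t : ℕ} (h : HasDecSubseq π t) : HasNesting π (t / 2) := by
  obtain ⟨p, hp, hv⟩ := h
  classical
  set L : Finset (Fin t) := Finset.univ.filter (fun i => p i < π (p i)) with hL
  set R : Finset (Fin t) := Finset.univ.filter (fun i => π (p i) < p i) with hR
  set E : Finset (Fin t) := Finset.univ.filter (fun i => p i = π (p i)) with hE
  have hEcard : E.card ≤ 1 := by
    refine Finset.card_le_one.mpr ?_
    intro a ha b hb
    simp only [hE, Finset.mem_filter] at ha hb
    by_contra hne
    rcases lt_or_gt_of_ne hne with hab | hab
    · have h1 := hp hab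
      have h2 : π (p b) < π (p a) := hv hab
      rw [← ha.2, ← hb.2] at h2
      exact lt_asymm h1 h2
    · have h1 := hp hab
      have h2 : π (p a) < π (p b) := hv hab
      rw [← ha.2, ← hb.2] at h2
      exact lt_asymm h1 h2
  have hcover : (Finset.univ : Finset (Fin t)) ⊆ L ∪ R ∪ E := by
    intro i _
    simp only [L, R, E, Finset.mem_union, Finset.mem_filter, Finset.mem_univ, true_and]
    rcases lt_trichotomy (p i) (π (p i)) with h | h | h
    · exact Or.inl (Or.inl h)
    · exact Or.inr h
    · exact Or.inl (Or.inr h)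
  have hsum : t ≤ L.card + R.card + 1 := by
    have h1 : (Finset.univ : Finset (Fin t)).card ≤ (L ∪ R ∪ E).card :=
      Finset.card_le_card hcover
    have h2 : (L ∪ R ∪ E).card ≤ L.card + R.card + E.card :=
      le_trans (Finset.card_union_le _ _) (by
        have := Finset.card_union_le L R; omega)
    simp only [Finset.card_univ, Fintype.card_fin] at h1
    omega
  rcases le_or_gt (t / 2) L.card with hc | hc
  · -- use L
    obtain ⟨S, hSsub, hScard⟩ := Finset.exists_subset_card_eq hc
    have e := S.orderEmbOfFin hScard
    refine ⟨fun s => p (S.orderEmbOfFin hScard s), hp.comp (S.orderEmbOfFin hScard).strictMono,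
      hv.comp_strictMono (S.orderEmbOfFin hScard).strictMono, ?_⟩
    intro s
    have hm : (S.orderEmbOfFin hScard s) ∈ L := hSsub (S.orderEmbOfFin_mem hScard s)
    simp only [L, Finset.mem_filter] at hm
    exact hm.2
  · -- use R
    have hcR : t / 2 ≤ R.card := by omega
    obtain ⟨S, hSsub, hScard⟩ := Finset.exists_subset_card_eq hcR
    set e : Fin (t / 2) → Fin t := fun s => S.orderEmbOfFin hScard s.rev with he
    have hanti : StrictAnti e := by
      intro a b hab
      exact (S.orderEmbOfFin hScard).strictMono (by
        simpa using Fin.rev_lt_rev.mpr hab)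
    refine ⟨fun s => π (p (e s)), ?_, ?_, ?_⟩
    · intro a b hab
      exact hv (hanti hab)
    · intro a b hab
      simp only [hπ _]
      exact hp (hanti hab)
    · intro s
      have hm : e s ∈ R := hSsub (S.orderEmbOfFin_mem hScard s.rev)
      simp only [R, Finset.mem_filter] at hm
      simpa only [hπ _] using hm.2

lemma dec_bdd {n : ℕ} (π : Equiv.Perm (Fin n)) : BddAbove {t | HasDecSubseq π t} := by
  refine ⟨n, fun t ht => ?_⟩
  obtain ⟨p, hp, -⟩ := ht
  simpa using Fintype.card_le_of_injective p hp.injective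

lemma nest_bdd {n : ℕ} (π : Equiv.Perm (Fin n)) : BddAbove {r | HasNesting π r} := by
  refine ⟨n, fun t ht => ?_⟩
  obtain ⟨f, hf, -, -⟩ := ht
  simpa using Fintype.card_le_of_injective f hf.injective

lemma dec_ne {n : ℕ} (π : Equiv.Perm (Fin n)) : {t | HasDecSubseq π t}.Nonempty :=
  ⟨0, Fin.elim0, fun a => a.elim0, fun a => a.elim0⟩

lemma nest_ne {n : ℕ} (π : Equiv.Perm (Fin n)) : {r | HasNesting π r}.Nonempty :=
  ⟨0, Fin.elim0, fun a => a.elim0, fun a => a.elim0, fun a => a.elim0⟩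

/-- For an involution `π ∈ S_n`, the nesting number equals the floor of half the
length of the longest decreasing subsequence: `nest(π) = ⌊ℓ(π)/2⌋`. -/
theorem nest_eq_decLen_div_two (n : ℕ) (π : Equiv.Perm (Fin n))
    (hπ : Function.Involutive ⇑π) :
    nestP π = decLen π / 2 := by
  have h1 : HasNesting π (nestP π) := Nat.sSup_mem (nest_ne π) (nest_bdd π)
  have h2 : HasDecSubseq π (decLen π) := Nat.sSup_mem (dec_ne π) (dec_bdd π)
  have h3 : 2 * nestP π ≤ decLen π := le_csSup (dec_bdd π) (nesting_to_dec hπ h1)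
  have h4 : decLen π / 2 ≤ nestP π := le_csSup (nest_bdd π) (dec_to_nesting hπ h2)
  omega
end

section
/- If π ∈ S_n is an involution and i_1 < i_2 < ⋯ < i_t are positions such that π(i_1) > π(i_2) > ⋯ > π(i_t) is a decreasing subsequence of maximal length among all decreasing subsequences of π, and no i_j is a fixed point of π, then the number s of indices j with π(i_j) > i_j equals t/2 (in particular t is even). -/
lemma hasDecSubseq_le_decLen {n m : ℕ} (π : Equiv.Perm (Fin n)) (h : HasDecSubseq π m) :
    m ≤ decLen π := by
  apply le_csSup
  · refine ⟨n, fun k hk => ?_⟩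
    obtain ⟨f, hf, -⟩ := hk
    simpa using Fintype.card_le_of_injective f hf.injective
  · exact h

lemma openers_double_le {n t : ℕ} (π : Equiv.Perm (Fin n)) (hπ : Function.Involutive ⇑π)
    (p : Fin t → Fin n) (hp : StrictMono p) (hdec : StrictAnti (fun s => π (p s))) :
    2 * (Finset.univ.filter fun j : Fin t => p j < π (p j)).card ≤ decLen π := by
  set A := Finset.univ.filter fun j : Fin t => p j < π (p j) with hA
  set s := A.card with hs
  have key : HasDecSubseq π (s + s) := by
    set a : Fin s → Fin t := fun i => ((A.orderIsoOfFin rfl) i : Fin t) with ha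
    have haMono : StrictMono a := fun i j h =>
      Subtype.coe_lt_coe.mpr ((A.orderIsoOfFin rfl).lt_iff_lt.mpr h)
    have haMem : ∀ i, p (a i) < π (p (a i)) := by
      intro i
      exact (Finset.mem_filter.mp ((A.orderIsoOfFin rfl) i).2).2
    have cross : ∀ i j : Fin s, p (a i) < π (p (a j)) := by
      intro i j
      rcases le_or_gt i j with h | h
      · exact lt_of_le_of_lt (hp.monotone (haMono.monotone h)) (haMem j)
      · exact (haMem i).trans (hdec (haMono h))
    refine ⟨fun i => if h : (i : ℕ) < s then p (a ⟨i, h⟩)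
        else π (p (a (Fin.rev ⟨(i : ℕ) - s, by omega⟩))), ?_, ?_⟩
    · intro i j hij
      have hij' : (i : ℕ) < (j : ℕ) := hij
      by_cases hi : (i : ℕ) < s <;> by_cases hj : (j : ℕ) < s <;> simp only [hi, hj,
        dif_pos, dif_neg, not_false_iff, dite_true, dite_false]
      · exact hp (haMono (show (⟨i, hi⟩ : Fin s) < ⟨j, hj⟩ from hij'))
      · exact cross _ _
      · omega
      · refine hdec (haMono ?_)
        rw [Fin.rev_lt_rev]
        exact show (i : ℕ) - s < (j : ℕ) - s by omega
    · intro i j hij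
      have hij' : (i : ℕ) < (j : ℕ) := hij
      by_cases hi : (i : ℕ) < s <;> by_cases hj : (j : ℕ) < s <;> simp only [hi, hj,
        dif_pos, dif_neg, not_false_iff, dite_true, dite_false]
      · exact hdec (haMono (show (⟨i, hi⟩ : Fin s) < ⟨j, hj⟩ from hij'))
      · rw [hπ]
        exact cross _ _
      · omega
      · rw [hπ, hπ]
        refine hp (haMono ?_)
        rw [Fin.rev_lt_rev]
        exact show (i : ℕ) - s < (j : ℕ) - s by omega
  have := hasDecSubseq_le_decLen π key
  omega

/-- If `p` is a decreasing subsequence of maximal length `t` in an involution `π`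
containing no fixed point of `π`, then the number of indices `j` with
`π (p j) > p j` equals `t / 2`; in particular `t` is even. -/
theorem maximal_decreasing_no_fixed_points (n t : ℕ) (π : Equiv.Perm (Fin n))
    (hπ : Function.Involutive ⇑π) (p : Fin t → Fin n) (hp : StrictMono p)
    (hdec : StrictAnti (fun s => π (p s))) (hmax : t = decLen π)
    (hnofix : ∀ s, π (p s) ≠ p s) :
    2 * (Finset.univ.filter fun j : Fin t => p j < π (p j)).card = t := by
  have h1 : 2 * (Finset.univ.filter fun j : Fin t => p j < π (p j)).card ≤ t := by
    have := openers_double_le π hπ p hp hdec; omega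
  -- the conjugate decreasing subsequence
  set q : Fin t → Fin n := fun j => π (p (Fin.rev j)) with hq
  have hqmono : StrictMono q :=
    fun i j h => hdec (Fin.rev_lt_rev.mpr h)
  have hqdec : StrictAnti fun s => π (q s) := by
    intro i j h
    show π (π (p (Fin.rev j))) < π (π (p (Fin.rev i)))
    rw [hπ, hπ]
    exact hp (Fin.rev_lt_rev.mpr h)
  have h2' := openers_double_le π hπ q hqmono hqdec
  have hcard : (Finset.univ.filter fun j : Fin t => q j < π (q j)).card
      = (Finset.univ.filter fun j : Fin t => π (p j) < p j).card := by
    refine Finset.card_bij (fun j _ => Fin.rev j) ?_ ?_ ?_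
    · intro j hj
      rw [Finset.mem_filter] at hj ⊢
      refine ⟨Finset.mem_univ _, ?_⟩
      have := hj.2
      rw [hq] at this
      simpa [hπ (p (Fin.rev j))] using this
    · intro a _ b _ h
      exact Fin.rev_injective h
    · intro b hb
      refine ⟨Fin.rev b, ?_, Fin.rev_rev b⟩
      rw [Finset.mem_filter] at hb ⊢
      refine ⟨Finset.mem_univ _, ?_⟩
      show q (Fin.rev b) < π (q (Fin.rev b))
      rw [hq]
      simpa [Fin.rev_rev, hπ (p b)] using hb.2
  have h2 : 2 * (Finset.univ.filter fun j : Fin t => π (p j) < p j).card ≤ t := by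
    rw [hcard] at h2'; omega
  have hsum : (Finset.univ.filter fun j : Fin t => p j < π (p j)).card
      + (Finset.univ.filter fun j : Fin t => π (p j) < p j).card = t := by
    have hcongr : (Finset.univ.filter fun j : Fin t => π (p j) < p j)
        = (Finset.univ.filter fun j : Fin t => ¬ (p j < π (p j))) := by
      ext j
      simp only [Finset.mem_filter, Finset.mem_univ, true_and]
      constructor
      · exact fun h => not_lt.mpr h.le
      · exact fun h => lt_of_le_of_ne (not_lt.mp h) (hnofix j)
    rw [hcongr, Finset.card_filter_add_card_filter_not, Finset.card_univ,
      Fintype.card_fin]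
  omega
end

section
/- For a fixed-point-free involution π ∈ S_{2n}, the length of the longest decreasing subsequence of π is even, and equals 2·nest(π). -/
lemma nesting_pair {n r : ℕ} {π : Equiv.Perm (Fin n)} {f : Fin r → Fin n}
    (hf1 : StrictMono f) (hf2 : StrictAnti fun t => π (f t))
    (hf3 : ∀ t, f t < π (f t)) : ∀ a b : Fin r, f a < π (f b) := by
  intro a b
  rcases le_total a b with h | h
  · exact lt_of_le_of_lt (hf1.monotone h) (hf3 b)
  · exact lt_of_lt_of_le (hf3 a) (hf2.antitone h)

lemma hasDecSubseq_of_hasNesting {n r : ℕ} {π : Equiv.Perm (Fin n)}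
    (hπ : Function.Involutive ⇑π) (h : HasNesting π r) : HasDecSubseq π (2 * r) := by
  obtain ⟨f, hf1, hf2, hf3⟩ := h
  have key := nesting_pair hf1 hf2 hf3
  refine ⟨fun s => if hs : (s : ℕ) < r then f ⟨s, hs⟩
      else π (f ⟨2 * r - 1 - s, by have := s.isLt; omega⟩), ?_, ?_⟩
  · intro s s' hlt
    have hlt' : (s : ℕ) < (s' : ℕ) := hlt
    dsimp only
    split_ifs with h1 h2 h2
    · exact hf1 (Fin.mk_lt_mk.mpr hlt')
    · exact key _ _
    · omega
    · exact hf2 (Fin.mk_lt_mk.mpr (by have := s'.isLt; omega))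
  · intro s s' hlt
    have hlt' : (s : ℕ) < (s' : ℕ) := hlt
    dsimp only
    split_ifs with h1 h2 h2
    · exact hf2 (Fin.mk_lt_mk.mpr hlt')
    · omega
    · rw [hπ]; exact key _ _
    · rw [hπ, hπ]; exact hf1 (Fin.mk_lt_mk.mpr (by have := s'.isLt; omega))

lemma exists_nesting_split {n t : ℕ} {π : Equiv.Perm (Fin n)}
    (hπ : Function.Involutive ⇑π) (hfpf : ∀ i, π i ≠ i) (h : HasDecSubseq π t) :
    ∃ m, m ≤ t ∧ HasNesting π m ∧ HasNesting π (t - m) := by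
  obtain ⟨p, hp1, hp2⟩ := h
  classical
  set H : Finset (Fin t) := Finset.univ.filter (fun s => p s < π (p s)) with hH
  set m := H.card with hm
  have hmt : m ≤ t := by
    simpa using Finset.card_filter_le (Finset.univ : Finset (Fin t))
      (fun s => p s < π (p s))
  -- downward closedness of the set of "high" indices
  have hdc : ∀ s s' : Fin t, s ≤ s' → p s' < π (p s') → p s < π (p s) := by
    intro s s' hle hhigh
    rcases eq_or_lt_of_le hle with rfl | hlt
    · exact hhigh
    rcases lt_or_gt_of_ne (hfpf (p s)) with hlow | hhi
    · exact absurd (lt_trans (lt_trans (lt_trans (hp1 hlt) hhigh) (hp2 hlt)) hlow)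
        (lt_irrefl _)
    · exact hhi
  have hchar : ∀ s : Fin t, (s : ℕ) < m ↔ p s < π (p s) := by
    intro s
    constructor
    · intro hsm
      by_contra hnh
      have hsub : H ⊆ Finset.Iio s := by
        intro s' hs'
        have hhigh : p s' < π (p s') := by
          simpa [hH] using hs'
        by_contra hns
        have hle : s ≤ s' := by
          simp only [Finset.mem_Iio] at hns
          exact le_of_not_gt hns
        exact hnh (hdc s s' hle hhigh)
      have := Finset.card_le_card hsub
      rw [Fin.card_Iio] at this
      omega
    · intro hhigh
      have hsub : Finset.Iic s ⊆ H := by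
        intro s' hs'
        have hle : s' ≤ s := Finset.mem_Iic.mp hs'
        simp only [hH, Finset.mem_filter, Finset.mem_univ, true_and]
        exact hdc s' s hle hhigh
      have := Finset.card_le_card hsub
      rw [Fin.card_Iic] at this
      omega
  refine ⟨m, hmt, ?_, ?_⟩
  · refine ⟨fun u => p ⟨u, lt_of_lt_of_le u.isLt hmt⟩, ?_, ?_, ?_⟩
    · intro u u' hlt
      exact hp1 (Fin.mk_lt_mk.mpr hlt)
    · intro u u' hlt
      exact hp2 (Fin.mk_lt_mk.mpr hlt)
    · intro u
      exact (hchar ⟨u, lt_of_lt_of_le u.isLt hmt⟩).mp u.isLt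
  · refine ⟨fun u => π (p ⟨t - 1 - u, by have := u.isLt; omega⟩), ?_, ?_, ?_⟩
    · intro u u' hlt
      have hlt' : (u : ℕ) < (u' : ℕ) := hlt
      exact hp2 (Fin.mk_lt_mk.mpr (by have := u'.isLt; omega))
    · intro u u' hlt
      have hlt' : (u : ℕ) < (u' : ℕ) := hlt
      dsimp only
      rw [hπ, hπ]
      exact hp1 (Fin.mk_lt_mk.mpr (by have := u'.isLt; omega))
    · intro u
      dsimp only
      rw [hπ]
      set idx : Fin t := ⟨t - 1 - u, by have := u.isLt; omega⟩ with hidx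
      rcases lt_or_gt_of_ne (hfpf (p idx)) with hlow | hhi
      · exact hlow
      · exfalso
        have : (idx : ℕ) < m := (hchar idx).mpr hhi
        have := u.isLt
        simp only [hidx] at *
        omega

/-- For a fixed-point-free involution `π ∈ S_{2n}`, the length of the longest
decreasing subsequence is even and equals twice the nesting number. -/
theorem decLen_fixed_point_free_involution (n : ℕ) (π : Equiv.Perm (Fin (2 * n)))
    (hπ : Function.Involutive ⇑π) (hfpf : ∀ i, π i ≠ i) :
    Even (decLen π) ∧ decLen π = 2 * nestP π := by
  have hbdd_dec : BddAbove {t | HasDecSubseq π t} := by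
    refine ⟨2 * n, fun t ht => ?_⟩
    obtain ⟨p, hp1, _⟩ := ht
    simpa using Fintype.card_le_of_injective p hp1.injective
  have hbdd_nest : BddAbove {r | HasNesting π r} := by
    refine ⟨2 * n, fun r hr => ?_⟩
    obtain ⟨f, hf1, _, _⟩ := hr
    simpa using Fintype.card_le_of_injective f hf1.injective
  have hne_dec : {t | HasDecSubseq π t}.Nonempty :=
    ⟨0, Fin.elim0, fun a => a.elim0, fun a => a.elim0⟩
  have hne_nest : {r | HasNesting π r}.Nonempty :=
    ⟨0, Fin.elim0, fun a => a.elim0, fun a => a.elim0, fun a => a.elim0⟩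
  have hnmem : HasNesting π (nestP π) := Nat.sSup_mem hne_nest hbdd_nest
  have h1 : 2 * nestP π ≤ decLen π :=
    le_csSup hbdd_dec (hasDecSubseq_of_hasNesting hπ hnmem)
  have h2 : decLen π ≤ 2 * nestP π := by
    refine csSup_le hne_dec (fun t ht => ?_)
    obtain ⟨m, hmt, hn1, hn2⟩ := exists_nesting_split hπ hfpf ht
    have a1 : m ≤ nestP π := le_csSup hbdd_nest hn1
    have a2 : t - m ≤ nestP π := le_csSup hbdd_nest hn2
    omega
  have heq : decLen π = 2 * nestP π := le_antisymm h2 h1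
  exact ⟨heq ▸ even_two_mul _, heq⟩
end

section
/- Let n ≥ k ≥ 0 with n−k even. For a partial matching m on points {1,…,n} with exactly k unmatched points, the cyclic geometric descent set cMDes(m) is empty if and only if k = n (i.e., m has no matched pairs). -/
/-- `x` lies strictly between `a` and `b` going clockwise around the circle
`ZMod n` (points labeled `0,…,n-1` in cyclic order). -/
def CBtw {n : ℕ} (a x b : ZMod n) : Prop :=
  0 < (x - a).val ∧ (x - a).val < (b - a).val

/-- The chords `{a, m a}` and `{b, m b}` of the circle cross: exactly one of
`b`, `m b` lies strictly between `a` and `m a` in cyclic order. -/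
def ChordCross {n : ℕ} (m : ZMod n → ZMod n) (a b : ZMod n) : Prop :=
  Xor' (CBtw a b (m a)) (CBtw a (m b) (m a))

/-- The cyclic geometric descent set of the partial matching given by the
involutive map `m` on the circle `ZMod n`: `i` is a cyclic geometric descent if
`{i, i+1}` is a chord, or the chords containing `i` and `i+1` cross, or `i` is
unmatched while `i+1` is matched. -/
def cMDes {n : ℕ} (m : ZMod n → ZMod n) : Set (ZMod n) :=
  {i | (m i = i + 1 ∧ m i ≠ i) ∨
       (m i ≠ i ∧ m (i + 1) ≠ i + 1 ∧ ChordCross m i (i + 1)) ∨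
       (m i = i ∧ m (i + 1) ≠ i + 1)}

/-- For a partial matching on `n` points on a circle with exactly `k` unmatched
points (`n ≥ k`, `n - k` even), the cyclic geometric descent set is empty iff
`k = n`, i.e. the matching has no chords. -/
theorem cMDes_empty_iff (n k : ℕ) [NeZero n] (hk : k ≤ n) (hev : Even (n - k))
    (m : ZMod n → ZMod n) (hm : Function.Involutive m)
    (hfix : (Finset.univ.filter fun i : ZMod n => m i = i).card = k) :
    cMDes m = ∅ ↔ k = n := by
  constructor
  · intro hemp
    by_contra hkn
    have hnd : ∀ i : ZMod n, i ∉ cMDes m := by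
      intro i h; rw [hemp] at h; exact h
    have hprop : ∀ i : ZMod n, m i = i → m (i + 1) = i + 1 := by
      intro i hi
      by_contra h
      exact hnd i (Or.inr (Or.inr ⟨hi, h⟩))
    have hex : ∃ j : ZMod n, m j ≠ j := by
      by_contra h
      push_neg at h
      have h1 : (Finset.univ.filter fun i : ZMod n => m i = i) = Finset.univ :=
        Finset.filter_true_of_mem (fun i _ => h i)
      rw [h1, Finset.card_univ, ZMod.card] at hfix
      exact hkn hfix.symm
    have hall : ∀ i : ZMod n, m i ≠ i := by
      intro i hi
      obtain ⟨j, hj⟩ := hex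
      have hstep : ∀ t : ℕ, m (i + t) = i + t := by
        intro t
        induction t with
        | zero => simpa using hi
        | succ t ih =>
          have := hprop (i + t) ih
          push_cast
          rw [← add_assoc]
          exact this
      apply hj
      have := hstep ((j - i).val)
      rwa [ZMod.natCast_val, ZMod.cast_id, show i + (j - i) = j from by ring] at this
    obtain ⟨i, -, hmin⟩ := Finset.exists_min_image Finset.univ
      (fun i : ZMod n => (m i - i).val) ⟨0, Finset.mem_univ 0⟩
    have hmi : m i - i ≠ 0 := sub_ne_zero.mpr (hall i)
    have hL1 : 1 ≤ (m i - i).val := Nat.one_le_iff_ne_zero.mpr (by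
      simpa [ZMod.val_eq_zero] using hmi)
    rcases eq_or_lt_of_le hL1 with h1 | h2
    · -- length-1 chord: clause 1
      have hcast : ((m i - i).val : ZMod n) = m i - i := by
        rw [ZMod.natCast_val, ZMod.cast_id]
      rw [← h1] at hcast
      push_cast at hcast
      have : m i = i + 1 := by
        rw [eq_comm, sub_eq_iff_eq_add'] at hcast
        exact hcast
      exact hnd i (Or.inl ⟨this, hall i⟩)
    · -- minimal length L > 1: chords at i and i+1 cross
      have hLn : (m i - i).val < n := ZMod.val_lt _
      haveI : Fact (1 < n) := ⟨lt_trans h2 hLn⟩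
      have hone : (i + 1 - i) = (1 : ZMod n) := by ring
      have hleft : CBtw i (i + 1) (m i) := by
        refine ⟨?_, ?_⟩ <;> rw [hone, ZMod.val_one]
        · exact one_pos
        · exact h2
      have hdj : (m i - i).val ≤ (m (i + 1) - (i + 1)).val := hmin _ (Finset.mem_univ _)
      have hne : m (i + 1) ≠ i := by
        intro h
        have : m i = i + 1 := by
          conv_lhs => rw [← h]
          exact hm (i + 1)
        have : (m i - i).val = 1 := by
          rw [this, show i + 1 - i = (1 : ZMod n) from by ring, ZMod.val_one]
        omega
      have hdjn : (m (i + 1) - (i + 1)).val + 1 < n := by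
        have hlt : (m (i + 1) - (i + 1)).val < n := ZMod.val_lt _
        rcases lt_or_eq_of_le (Nat.succ_le_of_lt hlt) with h | h
        · exact h
        · exfalso
          apply hne
          have : ((m (i + 1) - (i + 1)).val : ZMod n) = m (i + 1) - (i + 1) := by
            rw [ZMod.natCast_val, ZMod.cast_id]
          have h' : (m (i + 1) - (i + 1) : ZMod n) = ((n : ℕ) : ZMod n) - 1 := by
            rw [← this]
            have : (m (i + 1) - (i + 1)).val = n - 1 := by omega
            rw [this]
            push_cast [Nat.cast_sub (by omega : 1 ≤ n)]
            ring
          rw [ZMod.natCast_self] at h'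
          have : m (i + 1) = i := by
            have := h'
            rw [sub_eq_iff_eq_add] at this
            rw [this]; ring
          exact this
      have hval : (m (i + 1) - i).val = (m (i + 1) - (i + 1)).val + 1 := by
        have : m (i + 1) - i = (m (i + 1) - (i + 1)) + 1 := by ring
        rw [this, ZMod.val_add_of_lt]
        · rw [ZMod.val_one]
        · rw [ZMod.val_one]; exact hdjn
      have hright : ¬ CBtw i (m (i + 1)) (m i) := by
        rintro ⟨-, hlt⟩
        rw [hval] at hlt
        omega
      exact hnd i (Or.inr (Or.inl ⟨hall i, hall (i + 1),
        Or.inl ⟨hleft, hright⟩⟩))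
  · intro hkn
    have hall : ∀ i : ZMod n, m i = i := by
      have h1 : (Finset.univ.filter fun i : ZMod n => m i = i) = Finset.univ := by
        apply Finset.eq_univ_of_card
        rw [hfix, hkn]
        exact (ZMod.card n).symm
      intro i
      have : i ∈ Finset.univ.filter fun i : ZMod n => m i = i := by
        rw [h1]; exact Finset.mem_univ i
      exact (Finset.mem_filter.mp this).2
    ext i
    simp only [cMDes, Set.mem_setOf_eq, Set.mem_empty_iff_false, iff_false]
    rintro (⟨-, h2⟩ | ⟨h1, -⟩ | ⟨-, h2⟩)
    · exact h2 (hall i)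
    · exact h1 (hall i)
    · exact h2 (hall (i + 1))
end

section
/- Let n be even and let m be a perfect matching of {1,…,n} (no unmatched points), viewed as chords of a circle with points labeled 1,…,n. Then the cyclic geometric descent set cMDes(m) equals all of {1,…,n} if and only if m matches i with i + n/2 for every 1 ≤ i ≤ n/2. -/
/-- For a perfect matching `m` of the `n` points of a circle (`n` even), the
cyclic geometric descent set is all of the circle iff `m` matches each point `i`
with the antipodal point `i + n/2`. -/
theorem cMDes_univ_iff (n : ℕ) [NeZero n] (hn : Even n)
    (m : ZMod n → ZMod n) (hm : Function.Involutive m) (hfpf : ∀ i, m i ≠ i) :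
    cMDes m = Set.univ ↔ ∀ x : ZMod n, m x = x + ((n / 2 : ℕ) : ZMod n) := by
  have hn2 : 2 ≤ n := by
    have := NeZero.pos n
    rcases hn with ⟨k, hk⟩
    omega
  haveI : Fact (1 < n) := ⟨hn2⟩
  have hval1 : (1 : ZMod n).val = 1 := ZMod.val_one n
  have hcast : ∀ a : ZMod n, ((a.val : ℕ) : ZMod n) = a := fun a =>
    ZMod.natCast_rightInverse a
  constructor
  · intro hU
    set f : ZMod n → ℕ := fun i => (m i - i).val with hf
    have hfpos : ∀ i, 0 < f i := fun i =>
      ZMod.val_pos.mpr (sub_ne_zero.mpr (hfpf i))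
    have hstep : ∀ i, f i ≤ f (i + 1) := by
      intro i
      have hi : i ∈ cMDes m := hU ▸ Set.mem_univ i
      by_cases h1 : m i = i + 1
      · have h2 : m (i + 1) = i := by rw [← h1, hm]
        have hfi : f i = 1 := by simp [hf, h1, hval1]
        have hfi1 : f (i + 1) = n - 1 := by
          have : i - (i + 1) = -1 := by ring
          simp [hf, h2, this, ZMod.neg_val, hval1]
        omega
      · have hc : ChordCross m i (i + 1) := by
          rcases hi with ⟨h, _⟩ | ⟨_, _, h⟩ | ⟨h, _⟩
          · exact absurd h h1
          · exact h
          · exact absurd h (hfpf i)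
        have hi1 : (i + 1 - i) = (1 : ZMod n) := by ring
        have hfi1 : f i ≠ 1 := by
          intro he
          apply h1
          have : m i - i = 1 := by
            rw [← hcast (m i - i)]
            simp [hf] at he
            rw [he, Nat.cast_one]
          linear_combination this
        have hfirst : CBtw i (i + 1) (m i) := by
          constructor
          · rw [hi1, hval1]; omega
          · rw [hi1, hval1]
            have := hfpos i
            simp only [hf] at *
            omega
        have hsecond : ¬ CBtw i (m (i + 1)) (m i) := by
          rcases hc with ⟨_, hb⟩ | ⟨_, ha⟩
          · exact hb
          · exact absurd hfirst ha
        set v : ℕ := (m (i + 1) - i).val with hv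
        have hmne : m (i + 1) ≠ i := by
          intro he
          have h' := congrArg m he
          rw [hm] at h'
          exact absurd h'.symm h1
        have hvpos : 0 < v := ZMod.val_pos.mpr (sub_ne_zero.mpr hmne)
        have hvne : v ≠ f i := by
          intro he
          have : m (i + 1) - i = m i - i := by
            rw [← hcast (m (i + 1) - i), ← hcast (m i - i), ← hv, he]
          have h2 : m (i + 1) = m i := by linear_combination this
          have := hm.injective h2
          have h0 : (1 : ZMod n) = 0 := by linear_combination this
          rw [h0] at hval1
          simp at hval1
        have hge : f i < v := by
          have : ¬ (0 < v ∧ v < f i) := hsecond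
          omega
        have hfeq : f (i + 1) = v - 1 := by
          have ha : m (i + 1) - (i + 1) = ((v - 1 : ℕ) : ZMod n) := by
            have : m (i + 1) - i = ((v : ℕ) : ZMod n) := (hcast _).symm
            rw [Nat.cast_sub hvpos, ← this, Nat.cast_one]
            ring
          have hvlt : v - 1 < n := by
            have := ZMod.val_lt (m (i + 1) - i)
            omega
          simp only [hf]
          rw [ha, ZMod.val_cast_of_lt hvlt]
        omega
    have hchain : ∀ (k : ℕ) (x : ZMod n), f x ≤ f (x + (k : ZMod n)) := by
      intro k
      induction k with
      | zero => simp
      | succ k ih =>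
        intro x
        calc f x ≤ f (x + (k : ZMod n)) := ih x
          _ ≤ f (x + (k : ZMod n) + 1) := hstep _
          _ = f (x + ((k + 1 : ℕ) : ZMod n)) := by push_cast; ring_nf
    intro x
    have h1 : f x ≤ f (m x) := by
      have := hchain (m x - x).val x
      rwa [hcast, add_sub_cancel] at this
    have h2 : f (m x) ≤ f x := by
      have := hchain (x - m x).val (m x)
      rwa [hcast, add_sub_cancel] at this
    have h3 : f (m x) = n - f x := by
      have : m (m x) - m x = -(m x - x) := by rw [hm]; ring
      simp only [hf, this, ZMod.neg_val, if_neg (sub_ne_zero.mpr (hfpf x))]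
    have hlt := ZMod.val_lt (m x - x)
    have hfx : f x = n / 2 := by
      have := hfpos x
      simp only [hf] at *
      omega
    have : m x - x = ((n / 2 : ℕ) : ZMod n) := by
      rw [← hfx]; exact (hcast _).symm
    linear_combination this
  · intro h
    apply Set.eq_univ_of_forall
    intro i
    have hi := h i
    have hi1 := h (i + 1)
    by_cases h2 : n / 2 = 1
    · left
      refine ⟨?_, hfpf i⟩
      rw [hi, h2, Nat.cast_one]
    · have hn4 : 4 ≤ n := by rcases hn with ⟨k, hk⟩; omega
      have hhalf : ((n / 2 : ℕ) : ZMod n).val = n / 2 :=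
        ZMod.val_cast_of_lt (by omega)
      right; left
      refine ⟨hfpf i, hfpf (i + 1), ?_⟩
      left
      constructor
      · constructor
        · have : i + 1 - i = (1 : ZMod n) := by ring
          rw [this, hval1]; omega
        · have h3 : m i - i = ((n / 2 : ℕ) : ZMod n) := by rw [hi]; ring
          have h4 : i + 1 - i = (1 : ZMod n) := by ring
          rw [h3, h4, hval1, hhalf]
          omega
      · intro hb
        obtain ⟨hb1, hb2⟩ := hb
        have h3 : m (i + 1) - i = ((1 + n / 2 : ℕ) : ZMod n) := by
          rw [hi1]; push_cast; ring
        have h4 : m i - i = ((n / 2 : ℕ) : ZMod n) := by rw [hi]; ring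
        rw [h3, h4, hhalf, ZMod.val_cast_of_lt (by omega : 1 + n / 2 < n)] at hb2
        omega
end

section
/- Let 0 < k < n with n−k even, and let m be a partial matching of {1,…,n} with exactly k unmatched points, drawn on a circle. Then the cyclic geometric descent set cMDes(m) is a proper nonempty subset of {1,…,n}: ∅ ⊊ cMDes(m) ⊊ {1,…,n}. -/
/-- If a property on `ZMod n` is closed under adding one and holds somewhere,
it holds everywhere. -/
lemma succClosed_all {n : ℕ} [NeZero n] (P : ZMod n → Prop)
    (h : ∀ i, P i → P (i + 1)) (a : ZMod n) (ha : P a) : ∀ b, P b := by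
  have key : ∀ t : ℕ, P (a + (t : ZMod n)) := by
    intro t
    induction t with
    | zero => simpa using ha
    | succ t ih =>
      have := h _ ih
      have e : a + ((t + 1 : ℕ) : ZMod n) = a + (t : ZMod n) + 1 := by
        push_cast; ring
      rwa [e]
  intro b
  have e : a + (((b - a).val : ℕ) : ZMod n) = b := by
    simp [ZMod.natCast_val, ZMod.cast_id]
  have := key (b - a).val
  rwa [e] at this

/-- For a partial matching of `n` points on a circle with exactly `k` unmatched
points, where `0 < k < n` and `n - k` is even, the cyclic geometric descent set
is a proper nonempty subset of the circle. -/
theorem cMDes_proper_nonempty (n k : ℕ) [NeZero n] (hk0 : 0 < k) (hkn : k < n)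
    (hev : Even (n - k)) (m : ZMod n → ZMod n) (hm : Function.Involutive m)
    (hfix : (Finset.univ.filter fun i : ZMod n => m i = i).card = k) :
    cMDes m ≠ ∅ ∧ cMDes m ≠ Set.univ := by
  haveI : Fact (1 < n) := ⟨by omega⟩
  -- a fixed point exists
  obtain ⟨a, ha⟩ := Finset.card_pos.mp (by rw [hfix]; exact hk0)
  have ha : m a = a := (Finset.mem_filter.mp ha).2
  -- a non-fixed point exists
  have : ∃ b : ZMod n, m b ≠ b := by
    by_contra h
    push_neg at h
    have : (Finset.univ.filter fun i : ZMod n => m i = i) = Finset.univ := by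
      ext i; simp [h i]
    rw [this, Finset.card_univ, ZMod.card] at hfix
    omega
  obtain ⟨b, hb⟩ := this
  -- exists i with m i = i, m (i+1) ≠ i+1
  have h1 : ∃ i : ZMod n, m i = i ∧ m (i + 1) ≠ i + 1 := by
    by_contra h
    push_neg at h
    exact hb (succClosed_all (fun i => m i = i) h a ha b)
  -- exists j with m j ≠ j, m (j+1) = j+1
  have h2 : ∃ j : ZMod n, m j ≠ j ∧ m (j + 1) = j + 1 := by
    by_contra h
    push_neg at h
    exact succClosed_all (fun i => m i ≠ i) h b hb a ha
  obtain ⟨i, hi1, hi2⟩ := h1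
  obtain ⟨j, hj1, hj2⟩ := h2
  constructor
  · intro h
    have : i ∈ cMDes m := Or.inr (Or.inr ⟨hi1, hi2⟩)
    rw [h] at this
    exact this
  · intro h
    have hjmem : j ∈ cMDes m := h ▸ Set.mem_univ j
    rcases hjmem with ⟨hc, _⟩ | ⟨_, hc, _⟩ | ⟨hc, _⟩
    · have : j = j + 1 := by
        calc j = m (m j) := (hm j).symm
        _ = m (j + 1) := by rw [hc]
        _ = j + 1 := hj2
      have : (0 : ZMod n) = 1 := (left_eq_add.mp this).symm
      exact zero_ne_one this
    · exact hc hj2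
    · exact hj1 hc
end

section
/- If m is a partial matching of {1,…,n} drawn on a circle and r(m) is the matching obtained by rotating each chord clockwise one step (replacing each matched pair {i,j} by {i+1, j+1} mod n, and each unmatched point i by i+1 mod n), then cMDes(r(m)) = 1 + cMDes(m) (mod n), and r(m) has the same number of unmatched points and the same crossing number as m. -/
/-- The matching `m` has `r` pairwise crossing chords (a cyclic `r`-crossing). -/
def CHasCrossing {n : ℕ} (m : ZMod n → ZMod n) (r : ℕ) : Prop :=
  ∃ f : Fin r → ZMod n, (∀ t, m (f t) ≠ f t) ∧
    (∀ s t, s ≠ t → f s ≠ f t ∧ f s ≠ m (f t)) ∧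
    (∀ s t, s ≠ t → ChordCross m (f s) (f t))

/-- The (cyclic) crossing number of the matching `m`. -/
noncomputable def cCrn {n : ℕ} (m : ZMod n → ZMod n) : ℕ :=
  sSup {r | CHasCrossing m r}

lemma cbtw_add {n : ℕ} (a x b : ZMod n) : CBtw (a + 1) (x + 1) (b + 1) ↔ CBtw a x b := by
  simp [CBtw, add_sub_add_right_eq_sub]

lemma cross_rot {n : ℕ} (m : ZMod n → ZMod n) (a b : ZMod n) :
    ChordCross (fun x => m (x - 1) + 1) (a + 1) (b + 1) ↔ ChordCross m a b := by
  simp only [ChordCross, add_sub_cancel_right, cbtw_add]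

lemma chc_iff {n : ℕ} (m : ZMod n → ZMod n) (r : ℕ) :
    CHasCrossing (fun x => m (x - 1) + 1) r ↔ CHasCrossing m r := by
  constructor
  · rintro ⟨f, h1, h2, h3⟩
    refine ⟨fun t => f t - 1, fun t h => h1 t ?_, fun s t hst => ?_, fun s t hst => ?_⟩
    · show m (f t - 1) + 1 = f t
      rw [h, sub_add_cancel]
    · obtain ⟨ha, hb⟩ := h2 s t hst
      refine ⟨fun h => ha (by rwa [sub_left_inj] at h), fun h => hb ?_⟩
      rw [sub_eq_iff_eq_add] at h
      exact h
    · have := (cross_rot m (f s - 1) (f t - 1)).mp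
      rw [sub_add_cancel, sub_add_cancel] at this
      exact this (h3 s t hst)
  · rintro ⟨f, h1, h2, h3⟩
    refine ⟨fun t => f t + 1, fun t h => h1 t ?_, fun s t hst => ?_, fun s t hst => ?_⟩
    · have : m (f t + 1 - 1) + 1 = f t + 1 := h
      rw [add_sub_cancel_right] at this
      exact add_right_cancel this
    · obtain ⟨ha, hb⟩ := h2 s t hst
      constructor
      · exact fun h => ha (add_right_cancel h)
      · show f s + 1 ≠ m (f t + 1 - 1) + 1
        rw [add_sub_cancel_right]
        exact fun h => hb (add_right_cancel h)
    · exact (cross_rot m (f s) (f t)).mpr (h3 s t hst)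

/-- Rotating a matching on a circle one step clockwise (each chord `{i,j}`
becomes `{i+1, j+1}` mod `n`) shifts the cyclic geometric descent set by `1`
(mod `n`), and preserves the number of unmatched points and the crossing
number. -/
theorem cMDes_rotate (n : ℕ) [NeZero n] (m : ZMod n → ZMod n)
    (hm : Function.Involutive m) :
    cMDes (fun x => m (x - 1) + 1) = (fun i => i + 1) '' cMDes m ∧
    (Finset.univ.filter fun i : ZMod n => m (i - 1) + 1 = i).card
      = (Finset.univ.filter fun i : ZMod n => m i = i).card ∧
    cCrn (fun x => m (x - 1) + 1) = cCrn m := by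
  refine ⟨?_, ?_, ?_⟩
  · ext j
    have himg : j ∈ (fun i => i + 1) '' cMDes m ↔ j - 1 ∈ cMDes m := by
      constructor
      · rintro ⟨a, ha, rfl⟩; rwa [add_sub_cancel_right]
      · intro h; exact ⟨j - 1, h, sub_add_cancel j 1⟩
    rw [himg]
    set a := j - 1 with ha
    have hj : j = a + 1 := (sub_add_cancel j 1).symm
    rw [hj]
    show ((fun x => m (x - 1) + 1) (a + 1) = (a + 1) + 1 ∧ _) ∨ _ ∨ _ ↔ _
    simp only [cMDes, Set.mem_setOf_eq, add_sub_cancel_right, cross_rot,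
      add_left_inj, ne_eq]
  · refine Finset.card_bij (fun i _ => i - 1) ?_ ?_ ?_
    · intro i hi
      simp only [Finset.mem_filter, Finset.mem_univ, true_and] at hi ⊢
      have : m (i - 1) + 1 = (i - 1) + 1 := by rw [sub_add_cancel]; exact hi
      exact add_right_cancel this
    · intro a _ b _ h
      rwa [sub_left_inj] at h
    · intro b hb
      simp only [Finset.mem_filter, Finset.mem_univ, true_and] at hb
      exact ⟨b + 1, by simp [Finset.mem_filter, hb], by show b + 1 - 1 = b; rw [add_sub_cancel_right]⟩
  · unfold cCrn
    congr 1
    ext r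
    exact chc_iff m r
end

section
/- For every involution π ∈ S_n, nest(π) = ⌊height(λ)/2⌋, where λ is the Robinson–Schensted shape of π and height(λ) is the number of rows of λ. -/
/-- Row-insert the letter `x` into the row `r`: replace the first entry larger
than `x` (returning the bumped entry), or append `x` at the end. -/
def bumpRow (x : ℕ) (r : List ℕ) : List ℕ × Option ℕ :=
  match r.findIdx? (fun y => decide (x < y)) with
  | none => (r ++ [x], none)
  | some i => (r.set i x, r[i]?)

/-- Robinson–Schensted row insertion of a letter into a tableau
(given as its list of rows). -/
def RSInsert : List (List ℕ) → ℕ → List (List ℕ)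
  | [], x => [[x]]
  | r :: rs, x =>
    match bumpRow x r with
    | (r', none) => r' :: rs
    | (r', some y) => r' :: RSInsert rs y

/-- The Robinson–Schensted insertion tableau of a word. -/
def Ptab (w : List ℕ) : List (List ℕ) := w.foldl RSInsert []

/-- The one-line notation of `π ∈ S_n` as a word on the letters `0,…,n-1`. -/
def oneLine {n : ℕ} (π : Equiv.Perm (Fin n)) : List ℕ :=
  (List.finRange n).map fun i => ((π i : Fin n) : ℕ)

/-- The length of column `j` of the shape with row lengths `sh`. -/
def colLen (sh : List ℕ) (j : ℕ) : ℕ := (sh.filter fun r => decide (j < r)).length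

/-- The number of columns of odd length of the shape with row lengths `sh`. -/
def oddcol (sh : List ℕ) : ℕ :=
  ((List.range (sh.foldr max 0)).filter fun j => decide (Odd (colLen sh j))).length

/-- The entry of the tableau `T` in row `r`, column `c` (if any). -/
def entry (T : List (List ℕ)) (r c : ℕ) : Option ℕ := (T[r]?).bind fun row => row[c]?

/-!
For an involution, the positions of a nesting of size `r` followed by their partners in reverse
order form a decreasing subsequence of length `2r`. Conversely, the entries of a decreasing
subsequence that open an arc form a nesting, so do the partners of those that close an arc, and
at most one entry is a fixed point. Hence `nest π` is half the length of the longest decreasing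
subsequence, which is the number of rows by Schensted's theorem: each row insertion changes the
reading word of the tableau (rows from the bottom up) by Knuth moves, which preserve the lengths
of decreasing subsequences, and in a reading word a decreasing subsequence meets every row at most
once while the first column, read upwards, is one of full length.
-/

open List

namespace List

theorem exists_pairwise_length_iff {α : Type*} {R : α → α → Prop} {t : ℕ} :
    (∃ l : List α, l.length = t ∧ l.Pairwise R) ↔
      ∃ f : Fin t → α, ∀ ⦃i j⦄, i < j → R (f i) (f j) := by
  constructor
  · rintro ⟨l, rfl, hl⟩
    exact ⟨l.get, pairwise_iff_get.1 hl⟩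
  · rintro ⟨f, hf⟩
    exact ⟨ofFn f, length_ofFn, pairwise_ofFn.2 hf⟩

theorem length_le_length_filter_add_filter_add_filter {α : Type*} (p q r : α → Bool)
    (l : List α) (h : ∀ a ∈ l, p a ∨ q a ∨ r a) :
    l.length ≤ (l.filter p).length + (l.filter q).length + (l.filter r).length := by
  induction l with
  | nil => simp
  | cons a l ih =>
    have := ih fun b hb => h b (mem_cons_of_mem a hb)
    have ha := h a mem_cons_self
    simp only [filter_cons, length_cons]
    split_ifs <;> simp_all <;> omega

theorem sublist_triple_iff {α : Type*} {l : List α} {a b c : α} :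
    l <+ [a, b, c] ↔ l = [] ∨ l = [a] ∨ l = [b] ∨ l = [a, b] ∨ l = [c] ∨ l = [a, c] ∨
      l = [b, c] ∨ l = [a, b, c] := by
  rw [← mem_sublists]
  simp [sublists]

theorem sublist_finRange_iff {n : ℕ} {l : List (Fin n)} :
    l <+ finRange n ↔ l.Pairwise (· < ·) :=
  ⟨fun h => (pairwise_lt_finRange n).sublist h, fun h => sublist_of_subperm_of_pairwise
    (subperm_of_subset h.nodup fun a _ => mem_finRange a) h (pairwise_lt_finRange n)⟩

theorem Pairwise.append_cons_of_le {x y : ℕ} {s u : List ℕ}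
    (hr : (s ++ y :: u).Pairwise (· ≤ ·)) (hs : ∀ z ∈ s, z ≤ x) (hxy : x ≤ y) :
    (s ++ x :: u).Pairwise (· ≤ ·) := by
  simp only [pairwise_append, pairwise_cons, mem_cons, forall_eq_or_imp] at hr ⊢
  exact ⟨hr.1, ⟨fun z hz => hxy.trans (hr.2.1.1 z hz), hr.2.1.2⟩,
    fun a ha => ⟨hs a ha, (hr.2.2 a ha).2⟩⟩

theorem map_headI_sublist_flatten {α : Type*} [Inhabited α] {L : List (List α)}
    (hL : ∀ r ∈ L, r ≠ []) : L.map headI <+ L.flatten := by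
  induction L with
  | nil => simp
  | cons r L ih =>
    simp only [mem_cons, forall_eq_or_imp] at hL
    obtain ⟨a, r, rfl⟩ := exists_cons_of_ne_nil hL.1
    exact ((ih hL.2).trans (sublist_append_right r _)).cons_cons a

theorem length_le_length_of_sublist_flatten {α : Type*} [Preorder α] {L : List (List α)}
    (hL : ∀ r ∈ L, r.Pairwise (· ≤ ·)) {l : List α} (hl : l.Pairwise (· > ·))
    (h : l <+ L.flatten) : l.length ≤ L.length := by
  induction L generalizing l with
  | nil => simp_all
  | cons r L ih =>
    simp only [mem_cons, forall_eq_or_imp] at hL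
    obtain ⟨l₁, l₂, rfl, h₁, h₂⟩ := sublist_append_iff.1 h
    obtain ⟨hl₁, hl₂, -⟩ := pairwise_append.1 hl
    have hlen₁ : l₁.length ≤ 1 := by
      match l₁, h₁, hl₁ with
      | [], _, _ | [_], _, _ => simp
      | a :: b :: _, h₁, hl₁ =>
        exact absurd (rel_of_pairwise_cons (hL.1.sublist h₁) mem_cons_self)
          (not_le_of_gt (rel_of_pairwise_cons hl₁ mem_cons_self))
    simp only [length_append, length_cons]
    have := ih hL.2 hl₂ h₂
    omega

end List

section Nesting

variable {n : ℕ} {π : Equiv.Perm (Fin n)}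

theorem hasDecSubseq_iff_exists_list {t : ℕ} :
    HasDecSubseq π t ↔
      ∃ l : List (Fin n), l.length = t ∧ l.Pairwise (fun a b => a < b ∧ π b < π a) := by
  rw [exists_pairwise_length_iff]
  exact ⟨fun ⟨p, hp, hπp⟩ => ⟨p, fun _ _ h => ⟨hp h, hπp h⟩⟩,
    fun ⟨p, hp⟩ => ⟨p, fun _ _ h => (hp h).1, fun _ _ h => (hp h).2⟩⟩

theorem hasNesting_iff_exists_list {r : ℕ} :
    HasNesting π r ↔ ∃ l : List (Fin n), l.length = r ∧
      l.Pairwise (fun a b => a < b ∧ π b < π a) ∧ ∀ a ∈ l, a < π a := by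
  constructor
  · rintro ⟨f, hf, hπf, hopen⟩
    exact ⟨ofFn f, length_ofFn, pairwise_ofFn.2 fun _ _ h => ⟨hf h, hπf h⟩, by simpa using hopen⟩
  · rintro ⟨l, rfl, hl, hopen⟩
    have hl := pairwise_iff_get.1 hl
    exact ⟨l.get, fun _ _ h => (hl _ _ h).1, fun _ _ h => (hl _ _ h).2,
      fun i => hopen _ (get_mem l i)⟩

theorem HasDecSubseq.le {t : ℕ} (h : HasDecSubseq π t) : t ≤ n := by
  obtain ⟨p, hp, -⟩ := h
  simpa using Fintype.card_le_of_injective p hp.injective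

theorem HasNesting.le {r : ℕ} (h : HasNesting π r) : r ≤ n := by
  obtain ⟨f, hf, -⟩ := h
  simpa using Fintype.card_le_of_injective f hf.injective

theorem HasNesting.mono {r k : ℕ} (h : HasNesting π r) (hk : k ≤ r) : HasNesting π k := by
  obtain ⟨f, hf, hπf, hopen⟩ := h
  exact ⟨f ∘ Fin.castLE hk, hf.comp (Fin.strictMono_castLE hk),
    hπf.comp_strictMono (Fin.strictMono_castLE hk), fun _ => hopen _⟩

theorem lt_apply_of_mem_of_mem {l : List (Fin n)}
    (hl : l.Pairwise (fun a b => a < b ∧ π b < π a)) (hopen : ∀ a ∈ l, a < π a) :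
    ∀ a ∈ l, ∀ b ∈ l, a < π b := by
  induction l with
  | nil => simp
  | cons c l ih =>
    rw [pairwise_cons] at hl
    simp only [mem_cons, forall_eq_or_imp] at hopen ⊢
    exact ⟨⟨hopen.1, fun b hb => (hl.1 b hb).1.trans (hopen.2 b hb)⟩,
      fun a ha => ⟨(hopen.2 a ha).trans (hl.1 a ha).2, ih hl.2 hopen.2 a ha⟩⟩

theorem pairwise_reverse_map_of_involutive (hπ : Function.Involutive π) {l : List (Fin n)}
    (hl : l.Pairwise (fun a b => a < b ∧ π b < π a)) :
    (l.map π).reverse.Pairwise (fun a b => a < b ∧ π b < π a) := by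
  rw [pairwise_reverse, pairwise_map]
  exact hl.imp fun h => by rw [hπ, hπ]; exact h.symm

theorem HasNesting.hasDecSubseq_two_mul (hπ : Function.Involutive π) {r : ℕ}
    (h : HasNesting π r) : HasDecSubseq π (2 * r) := by
  obtain ⟨l, rfl, hl, hopen⟩ := hasNesting_iff_exists_list.1 h
  refine hasDecSubseq_iff_exists_list.2 ⟨l ++ (l.map π).reverse, by simp [two_mul], ?_⟩
  have hcross := lt_apply_of_mem_of_mem hl hopen
  refine pairwise_append.2 ⟨hl, pairwise_reverse_map_of_involutive hπ hl, ?_⟩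
  simp only [mem_reverse, mem_map]
  rintro a ha _ ⟨b, hb, rfl⟩
  rw [hπ]
  exact ⟨hcross a ha b hb, hcross b hb a ha⟩

theorem HasDecSubseq.hasNesting_div_two (hπ : Function.Involutive π) {t : ℕ}
    (h : HasDecSubseq π t) : HasNesting π (t / 2) := by
  obtain ⟨l, rfl, hl⟩ := hasDecSubseq_iff_exists_list.1 h
  set A := l.filter (fun a => a < π a)
  set B := l.filter (fun a => π a < a)
  set F := l.filter (fun a => π a = a)
  have hA : HasNesting π A.length :=
    hasNesting_iff_exists_list.2 ⟨A, rfl, hl.filter _, by simp [A]⟩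
  have hB : HasNesting π B.length := by
    refine hasNesting_iff_exists_list.2
      ⟨(B.map π).reverse, by simp, pairwise_reverse_map_of_involutive hπ (hl.filter _), ?_⟩
    simp only [mem_reverse, mem_map]
    rintro _ ⟨b, hb, rfl⟩
    rw [hπ]
    exact of_decide_eq_true (mem_filter.1 hb).2
  have hF : F.length ≤ 1 := by
    have hFl : F.Pairwise (fun _ _ => False) := (hl.filter _).imp_of_mem fun ha hb h => by
      simp only [F, mem_filter, decide_eq_true_eq] at ha hb
      exact absurd h.1 (by rw [← ha.2, ← hb.2]; exact not_lt.2 h.2.le)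
    match F, hFl with
    | [], _ | [_], _ => simp
    | _ :: _ :: _, h => exact (rel_of_pairwise_cons h mem_cons_self).elim
  have hcount : l.length ≤ A.length + B.length + F.length :=
    l.length_le_length_filter_add_filter_add_filter _ _ _ fun a _ => by
      rcases lt_trichotomy a (π a) with h | h | h
      · simp [h]
      · simp [← h]
      · simp [h]
  rcases le_total A.length B.length with hAB | hAB
  · exact hB.mono (by omega)
  · exact hA.mono (by omega)

theorem nestP_eq_decLen_div_two (hπ : Function.Involutive π) : nestP π = decLen π / 2 := by
  have hD : BddAbove {t | HasDecSubseq π t} := ⟨n, fun _ => HasDecSubseq.le⟩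
  have hN : BddAbove {r | HasNesting π r} := ⟨n, fun _ => HasNesting.le⟩
  have hnest : HasNesting π (nestP π) :=
    Nat.sSup_mem ⟨0, (hasNesting_iff_exists_list.2 ⟨[], rfl, by simp, by simp⟩)⟩ hN
  have hdec : HasDecSubseq π (decLen π) :=
    Nat.sSup_mem ⟨0, (hasDecSubseq_iff_exists_list.2 ⟨[], rfl, by simp⟩)⟩ hD
  have h₁ : 2 * nestP π ≤ decLen π := le_csSup hD (hnest.hasDecSubseq_two_mul hπ)
  have h₂ : decLen π / 2 ≤ nestP π := le_csSup hN (hdec.hasNesting_div_two hπ)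
  omega

end Nesting

def HasDecSublist (w : List ℕ) (t : ℕ) : Prop :=
  ∃ l, l <+ w ∧ l.Pairwise (· > ·) ∧ l.length = t

/-- Stands in for Knuth equivalence, which it contains; being a congruence is built in. -/
def DecEquiv (u v : List ℕ) : Prop :=
  ∀ a b t, HasDecSublist (a ++ u ++ b) t ↔ HasDecSublist (a ++ v ++ b) t

/-- The range condition keeps a traded subsequence decreasing inside any context. -/
def DecRefines (u v : List ℕ) : Prop :=
  ∀ l, l <+ u → l.Pairwise (· > ·) → ∃ l', l' <+ v ∧ l'.Pairwise (· > ·) ∧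
    l'.length = l.length ∧ ∀ e ∈ l', ∃ e₁ ∈ l, ∃ e₂ ∈ l, e₁ ≤ e ∧ e ≤ e₂

theorem HasDecSublist.of_decRefines {u v : List ℕ} (h : DecRefines u v) {a b : List ℕ} {t : ℕ}
    (hu : HasDecSublist (a ++ u ++ b) t) : HasDecSublist (a ++ v ++ b) t := by
  obtain ⟨l, hsub, hdec, rfl⟩ := hu
  obtain ⟨l₁, lb, rfl, hl₁, hlb⟩ := sublist_append_iff.1 hsub
  obtain ⟨la, lu, rfl, hla, hlu⟩ := sublist_append_iff.1 hl₁
  simp only [pairwise_append, mem_append] at hdec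
  obtain ⟨⟨hla', hlu', hcross_au⟩, hlb', hcross_b⟩ := hdec
  obtain ⟨lv, hlv, hlv', hlen, hrange⟩ := h lu hlu hlu'
  refine ⟨la ++ lv ++ lb, (hla.append hlv).append hlb, ?_, by simp [hlen]⟩
  simp only [pairwise_append, mem_append]
  refine ⟨⟨hla', hlv', fun x hx e he => ?_⟩, hlb', ?_⟩
  · obtain ⟨-, -, e₂, he₂, -, hle⟩ := hrange e he
    exact lt_of_le_of_lt hle (hcross_au x hx e₂ he₂)
  · rintro e (he | he) y hy
    · exact hcross_b e (.inl he) y hy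
    · obtain ⟨e₁, he₁, -, -, hle, -⟩ := hrange e he
      exact lt_of_lt_of_le (hcross_b e₁ (.inr he₁) y hy) hle

namespace DecEquiv

theorem of_decRefines {u v : List ℕ} (h₁ : DecRefines u v) (h₂ : DecRefines v u) :
    DecEquiv u v :=
  fun _ _ _ => ⟨.of_decRefines h₁, .of_decRefines h₂⟩

theorem hasDecSublist_iff {u v : List ℕ} (h : DecEquiv u v) (t : ℕ) :
    HasDecSublist u t ↔ HasDecSublist v t := by
  simpa using h [] [] t

theorem refl (u : List ℕ) : DecEquiv u u := fun _ _ _ => Iff.rfl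

theorem symm {u v : List ℕ} (h : DecEquiv u v) : DecEquiv v u := fun a b t => (h a b t).symm

theorem trans {u v w : List ℕ} (h₁ : DecEquiv u v) (h₂ : DecEquiv v w) : DecEquiv u w :=
  fun a b t => (h₁ a b t).trans (h₂ a b t)

theorem append_left {u v : List ℕ} (c : List ℕ) (h : DecEquiv u v) :
    DecEquiv (c ++ u) (c ++ v) := fun a b t => by
  simpa only [append_assoc] using h (a ++ c) b t

theorem append_right {u v : List ℕ} (c : List ℕ) (h : DecEquiv u v) :
    DecEquiv (u ++ c) (v ++ c) := fun a b t => by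
  simpa only [append_assoc] using h a (c ++ b) t

theorem cons {u v : List ℕ} (c : ℕ) (h : DecEquiv u v) : DecEquiv (c :: u) (c :: v) :=
  h.append_left [c]

end DecEquiv

/- In both Knuth relations, every decreasing subsequence of one side is one of the other, except
`[z, x]` on the right, which is traded for `[y, x]` (resp. `[z, y]`). -/

theorem decEquiv_knuth_of_lt_of_le {x y z : ℕ} (hxy : x < y) (hyz : y ≤ z) :
    DecEquiv [y, x, z] [y, z, x] := by
  refine .of_decRefines ?_ ?_ <;> intro l hl hdec <;>
    rcases sublist_triple_iff.1 hl with rfl | rfl | rfl | rfl | rfl | rfl | rfl | rfl <;>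
    first
    | (simp at hdec; omega)
    | (refine ⟨_, ?_, hdec, rfl, fun e he => ⟨e, he, e, he, le_rfl, le_rfl⟩⟩; simp)
    | (refine ⟨[y, x], ?_, ?_, rfl, ?_⟩ <;> simp <;> omega)

theorem decEquiv_knuth_of_le_of_lt {x y z : ℕ} (hxy : x ≤ y) (hyz : y < z) :
    DecEquiv [x, z, y] [z, x, y] := by
  refine .of_decRefines ?_ ?_ <;> intro l hl hdec <;>
    rcases sublist_triple_iff.1 hl with rfl | rfl | rfl | rfl | rfl | rfl | rfl | rfl <;>
    first
    | (simp at hdec; omega)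
    | (refine ⟨_, ?_, hdec, rfl, fun e he => ⟨e, he, e, he, le_rfl, le_rfl⟩⟩; simp)
    | (refine ⟨[z, y], ?_, ?_, rfl, ?_⟩ <;> simp <;> omega)

theorem decEquiv_slide_right {x a : ℕ} {r : List ℕ} (hr : r.Pairwise (· ≤ ·)) (hxa : x < a)
    (har : ∀ z ∈ r, a ≤ z) : DecEquiv (a :: x :: r) (a :: r ++ [x]) := by
  induction r generalizing a with
  | nil => exact .refl _
  | cons b r ih =>
    rw [pairwise_cons] at hr
    have hab : a ≤ b := har b mem_cons_self
    have hswap := (decEquiv_knuth_of_lt_of_le hxa hab).append_right r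
    exact hswap.trans ((ih hr.2 (hxa.trans_le hab) hr.1).cons a)

theorem decEquiv_slide_left {y c : ℕ} {s : List ℕ} (rest : List ℕ) (hs : s.Pairwise (· ≤ ·))
    (hsc : ∀ z ∈ s, z ≤ c) (hcy : c < y) :
    DecEquiv (y :: (s ++ c :: rest)) (s ++ y :: c :: rest) := by
  induction s with
  | nil => exact .refl _
  | cons a s ih =>
    rw [pairwise_cons] at hs
    rw [forall_mem_cons] at hsc
    obtain ⟨b, w, hw, hab, hby⟩ : ∃ b w, s ++ c :: rest = b :: w ∧ a ≤ b ∧ b < y := by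
      cases s with
      | nil => exact ⟨c, rest, rfl, hsc.1, hcy⟩
      | cons b s => exact ⟨b, s ++ c :: rest, rfl, hs.1 b mem_cons_self,
          (hsc.2 b mem_cons_self).trans_lt hcy⟩
    have hswap := ((decEquiv_knuth_of_le_of_lt hab hby).append_right w).symm
    simp only [cons_append] at hswap
    rw [cons_append, hw]
    exact hswap.trans (hw ▸ (ih hs.2 hsc.2).cons a)

theorem decEquiv_bump {x y : ℕ} {s u : List ℕ} (hr : (s ++ y :: u).Pairwise (· ≤ ·))
    (hs : ∀ z ∈ s, z ≤ x) (hxy : x < y) :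
    DecEquiv (y :: (s ++ x :: u)) ((s ++ y :: u) ++ [x]) := by
  rw [append_assoc]
  obtain ⟨hs_sorted, hyu, -⟩ := pairwise_append.1 hr
  obtain ⟨hyu, hu⟩ := pairwise_cons.1 hyu
  exact (decEquiv_slide_left u hs_sorted hs hxy).trans
    ((decEquiv_slide_right hu hxy hyu).append_left s)

theorem bumpRow_cons (x a : ℕ) (r : List ℕ) :
    bumpRow x (a :: r) = if x < a then (x :: r, some a)
      else (a :: (bumpRow x r).1, (bumpRow x r).2) := by
  by_cases h : x < a
  · simp [bumpRow, findIdx?_cons, h]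
  · simp only [bumpRow, findIdx?_cons, h, decide_false, ite_false]
    cases findIdx? (fun y => decide (x < y)) r <;> simp

theorem bumpRow_of_forall_le {x : ℕ} {r : List ℕ} (h : ∀ z ∈ r, z ≤ x) :
    bumpRow x r = (r ++ [x], none) := by
  induction r with
  | nil => rfl
  | cons a r ih =>
    simp only [forall_mem_cons] at h
    simp [bumpRow_cons, not_lt.2 h.1, ih h.2]

theorem bumpRow_append_cons {x y : ℕ} {s u : List ℕ} (hs : ∀ z ∈ s, z ≤ x) (hxy : x < y) :
    bumpRow x (s ++ y :: u) = (s ++ x :: u, some y) := by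
  induction s with
  | nil => simp [bumpRow_cons, hxy]
  | cons a s ih =>
    simp only [forall_mem_cons] at hs
    simp [bumpRow_cons, not_lt.2 hs.1, ih hs.2]

theorem forall_le_or_exists_append_cons (x : ℕ) (r : List ℕ) :
    (∀ z ∈ r, z ≤ x) ∨ ∃ s y u, r = s ++ y :: u ∧ (∀ z ∈ s, z ≤ x) ∧ x < y := by
  induction r with
  | nil => simp
  | cons a r ih =>
    by_cases hxa : x < a
    · exact .inr ⟨[], a, r, rfl, by simp, hxa⟩
    · rcases ih with h | ⟨s, y, u, rfl, hs, hxy⟩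
      · exact .inl (forall_mem_cons.2 ⟨not_lt.1 hxa, h⟩)
      · exact .inr ⟨a :: s, y, u, rfl, forall_mem_cons.2 ⟨not_lt.1 hxa, hs⟩, hxy⟩

theorem rsInsert_cons_of_forall_le {x : ℕ} {r : List ℕ} (rs : List (List ℕ))
    (h : ∀ z ∈ r, z ≤ x) : RSInsert (r :: rs) x = (r ++ [x]) :: rs := by
  simp [RSInsert, bumpRow_of_forall_le h]

theorem rsInsert_cons_append_cons {x y : ℕ} {s u : List ℕ} (rs : List (List ℕ))
    (hs : ∀ z ∈ s, z ≤ x) (hxy : x < y) :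
    RSInsert ((s ++ y :: u) :: rs) x = (s ++ x :: u) :: RSInsert rs y := by
  simp [RSInsert, bumpRow_append_cons hs hxy]

/-- Of the column conditions of a tableau only the first column's is kept: it is all that
counting rows needs. -/
structure IsPreTableau (T : List (List ℕ)) : Prop where
  ne_nil : ∀ r ∈ T, r ≠ []
  sorted : ∀ r ∈ T, r.Pairwise (· ≤ ·)
  firstCol : T.IsChain (fun r r' => r.headI < r'.headI)

def readingWord (T : List (List ℕ)) : List ℕ := T.reverse.flatten

theorem readingWord_cons (r : List ℕ) (T : List (List ℕ)) :
    readingWord (r :: T) = readingWord T ++ r := by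
  simp [readingWord]

theorem lt_headI_head_rsInsert {b x : ℕ} {T : List (List ℕ)} (hbx : b < x)
    (hT : ∀ r ∈ T.head?, b < r.headI) : ∀ q ∈ (RSInsert T x).head?, b < q.headI := by
  cases T with
  | nil => simpa [RSInsert] using hbx
  | cons r rs =>
    simp only [head?_cons, Option.mem_def, Option.some.injEq, forall_eq'] at hT ⊢
    rcases forall_le_or_exists_append_cons x r with h | ⟨s, y, u, rfl, hs, hxy⟩
    · rw [rsInsert_cons_of_forall_le rs h]
      cases r <;> simp_all
    · rw [rsInsert_cons_append_cons rs hs hxy]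
      cases s <;> simp_all

theorem IsPreTableau.rsInsert {T : List (List ℕ)} (hT : IsPreTableau T) (x : ℕ) :
    IsPreTableau (RSInsert T x) := by
  induction T generalizing x with
  | nil => exact ⟨by simp [RSInsert], by simp [RSInsert], by simp [RSInsert]⟩
  | cons r rs ih =>
    obtain ⟨hne, hsorted, hcol⟩ := hT
    simp only [mem_cons, forall_eq_or_imp] at hne hsorted
    rw [isChain_cons] at hcol
    have hrs : IsPreTableau rs := ⟨hne.2, hsorted.2, hcol.2⟩
    rcases forall_le_or_exists_append_cons x r with h | ⟨s, y, u, rfl, hs, hxy⟩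
    · rw [rsInsert_cons_of_forall_le rs h]
      obtain ⟨a, r, rfl⟩ := exists_cons_of_ne_nil hne.1
      refine ⟨forall_mem_cons.2 ⟨by simp, hne.2⟩, ?_, by simpa [isChain_cons] using hcol⟩
      simp only [mem_cons, forall_eq_or_imp]
      refine ⟨pairwise_append.2 ⟨hsorted.1, by simp, by simpa using h⟩, hsorted.2⟩
    · rw [rsInsert_cons_append_cons rs hs hxy]
      obtain ⟨hne', hsorted', hcol'⟩ := ih hrs y
      refine ⟨forall_mem_cons.2 ⟨by simp, hne'⟩, ?_, isChain_cons.2 ⟨?_, hcol'⟩⟩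
      · simp only [mem_cons, forall_eq_or_imp]
        exact ⟨hsorted.1.append_cons_of_le hs hxy.le, hsorted'⟩
      · have hhead : (s ++ x :: u).headI ≤ x ∧ (s ++ x :: u).headI ≤ (s ++ y :: u).headI := by
          cases s <;> simp_all [hxy.le]
        exact lt_headI_head_rsInsert (hhead.1.trans_lt hxy)
          fun q hq => hhead.2.trans_lt (hcol.1 q hq)

theorem decEquiv_readingWord_rsInsert {T : List (List ℕ)} (hT : ∀ r ∈ T, r.Pairwise (· ≤ ·))
    (x : ℕ) : DecEquiv (readingWord (RSInsert T x)) (readingWord T ++ [x]) := by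
  induction T generalizing x with
  | nil => exact .refl _
  | cons r rs ih =>
    simp only [mem_cons, forall_eq_or_imp] at hT
    rcases forall_le_or_exists_append_cons x r with h | ⟨s, y, u, rfl, hs, hxy⟩
    · rw [rsInsert_cons_of_forall_le rs h, readingWord_cons, readingWord_cons, append_assoc]
      exact .refl _
    · rw [rsInsert_cons_append_cons rs hs hxy, readingWord_cons, readingWord_cons, append_assoc]
      refine ((ih hT.2 y).append_right (s ++ x :: u)).trans ?_
      simpa only [append_assoc, singleton_append] using
        (decEquiv_bump hT.1 hs hxy).append_left (readingWord rs)

theorem IsPreTableau.foldl_rsInsert {T : List (List ℕ)} (hT : IsPreTableau T) (w : List ℕ) :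
    IsPreTableau (w.foldl RSInsert T) := by
  induction w generalizing T with
  | nil => exact hT
  | cons x w ih => exact ih (hT.rsInsert x)

theorem decEquiv_readingWord_foldl_rsInsert {T : List (List ℕ)} (hT : IsPreTableau T)
    (w : List ℕ) : DecEquiv (readingWord (w.foldl RSInsert T)) (readingWord T ++ w) := by
  induction w generalizing T with
  | nil => simpa using .refl _
  | cons x w ih =>
    have h := (ih (hT.rsInsert x)).trans
      ((decEquiv_readingWord_rsInsert hT.sorted x).append_right w)
    simpa using h

theorem IsPreTableau.hasDecSublist_readingWord_iff {T : List (List ℕ)} (hT : IsPreTableau T)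
    (t : ℕ) : HasDecSublist (readingWord T) t ↔ t ≤ T.length := by
  constructor
  · rintro ⟨l, hl, hdec, rfl⟩
    simpa using length_le_length_of_sublist_flatten (by simpa using hT.sorted) hdec hl
  · intro ht
    have hheads : (T.map headI).reverse.Pairwise (· > ·) := by
      rw [pairwise_reverse]
      exact isChain_iff_pairwise.1 ((isChain_map headI).2 hT.firstCol)
    refine ⟨((T.map headI).reverse).take t, (take_sublist _ _).trans ?_,
      hheads.sublist (take_sublist _ _), by simpa using ht⟩
    rw [← map_reverse]
    exact map_headI_sublist_flatten (by simpa using hT.ne_nil)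

theorem hasDecSublist_iff_le_length_Ptab (w : List ℕ) (t : ℕ) :
    HasDecSublist w t ↔ t ≤ (Ptab w).length := by
  have hnil : IsPreTableau [] := ⟨by simp, by simp, by simp⟩
  rw [Ptab, ← (hnil.foldl_rsInsert w).hasDecSublist_readingWord_iff]
  simpa [readingWord] using ((decEquiv_readingWord_foldl_rsInsert hnil w).hasDecSublist_iff t).symm

theorem hasDecSublist_oneLine_iff {n : ℕ} (π : Equiv.Perm (Fin n)) (t : ℕ) :
    HasDecSublist (oneLine π) t ↔
      ∃ l : List (Fin n), l.length = t ∧ l.Pairwise (fun a b => a < b ∧ π b < π a) := by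
  simp only [HasDecSublist, oneLine, sublist_map_iff, sublist_finRange_iff]
  constructor
  · rintro ⟨_, ⟨l, hl, rfl⟩, hdec, rfl⟩
    exact ⟨l, (length_map _).symm, hl.and (pairwise_map.1 hdec)⟩
  · rintro ⟨l, rfl, hl⟩
    exact ⟨_, ⟨l, hl.imp And.left, rfl⟩, pairwise_map.2 (hl.imp And.right), length_map _⟩

theorem decLen_eq_length_Ptab {n : ℕ} (π : Equiv.Perm (Fin n)) :
    decLen π = (Ptab (oneLine π)).length := by
  have hset : {t | HasDecSubseq π t} = Set.Iic (Ptab (oneLine π)).length := by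
    ext t
    rw [Set.mem_ofPred_eq, hasDecSubseq_iff_exists_list, ← hasDecSublist_oneLine_iff,
      hasDecSublist_iff_le_length_Ptab, Set.mem_Iic]
  rw [decLen, hset, csSup_Iic]

/-- For every involution `π ∈ S_n`, the nesting number equals the floor of half
the number of rows of the Robinson–Schensted shape of `π`. -/
theorem nest_eq_half_height (n : ℕ) (π : Equiv.Perm (Fin n))
    (hπ : Function.Involutive ⇑π) :
    nestP π = (Ptab (oneLine π)).length / 2 := by
  rw [nestP_eq_decLen_div_two hπ, decLen_eq_length_Ptab]
end
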